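/- arXiv:hep-th/9208007 — 4 statements merged into one kernel-verified Lean document; each statement's English description precedes it below -/
import Mathlib

section
/- If β : A → Γ_B transforms under a gauge transformation γ as β^γ = γ*β*γ⁻¹ + γ*d(γ⁻¹), then the operator ∇ = d + β* on sections satisfies the covariance property ∇^γ(σ^γ) = γ*(∇σ) for every section σ, where ∇^γ = d + β^γ* and σ^γ = γ*σ. -/
/- STATEMENT 3: If β : A → Γ_B transforms under a gauge transformation γ as
β^γ = γ*β*γ⁻¹ + γ*d(γ⁻¹), then ∇ = d + β* satisfies ∇^γ(σ^γ) = γ*(nablaSigma) for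
every section σ, where ∇^γ = d + β^γ* and σ^γ = γ*σ.
Model: the differential calculus (Γ_B, d) on B sits inside a differential
algebra Ω via an algebra inclusion ι : B → Ω with differential d : Ω → Ω
obeying the Leibniz rule on B. -/

open TensorProduct

/-- Convolution of two maps A → Ω. -/
noncomputable def convAA {k A Ω : Type*} [Field k] [Ring A] [HopfAlgebra k A]
    [Ring Ω] [Algebra k Ω] (f g : A →ₗ[k] Ω) : A →ₗ[k] Ω :=
  (LinearMap.mul' k Ω) ∘ₗ (TensorProduct.map f g) ∘ₗ Coalgebra.comul

/-- Convolution of f : A → Ω with g : V → Ω using a left coaction ρL on V. -/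
noncomputable def convAV {k A V Ω : Type*} [Field k] [Ring A] [HopfAlgebra k A]
    [AddCommGroup V] [Module k V] [Ring Ω] [Algebra k Ω]
    (ρL : V →ₗ[k] A ⊗[k] V) (f : A →ₗ[k] Ω) (g : V →ₗ[k] Ω) : V →ₗ[k] Ω :=
  (LinearMap.mul' k Ω) ∘ₗ (TensorProduct.map f g) ∘ₗ ρL

/- The gauge-transformed connection form satisfies `β^γ * γ = γ * β - dγ` in the convolution
algebra of maps `A → Ω`: applying `d` to `γ⁻¹ * γ = 1` with the Leibniz rule gives
`dγ⁻¹ * γ = -(γ⁻¹ * dγ)`, so `γ * dγ⁻¹ * γ = -dγ`. Then, by the Leibniz rule and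
associativity of the coaction,
`d(γ * σ) + β^γ * (γ * σ) = dγ * σ + γ * dσ + (γ * β - dγ) * σ = γ * (dσ + β * σ)`. -/

open WithConv

theorem gauge_transform_mul_eq {R : Type*} [Ring R] {u v b du dv : R} (huv : u * v = 1) (hvu : v * u = 1)
    (hd : dv * u + v * du = 0) :
    (u * (b * v) + u * dv) * u = u * b - du :=
  calc (u * (b * v) + u * dv) * u = u * b * (v * u) + u * (dv * u) := by noncomm_ring
    _ = u * b - u * v * du := by rw [hvu, eq_neg_of_add_eq_zero_left hd]; noncomm_ring
    _ = u * b - du := by rw [huv, one_mul]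

section Convolution

variable {k A V Ω : Type*} [Field k] [Ring A] [HopfAlgebra k A]
  [AddCommGroup V] [Module k V] [Ring Ω] [Algebra k Ω]

theorem convAV_add_right (ρ : V →ₗ[k] A ⊗[k] V) (f : A →ₗ[k] Ω) (g h : V →ₗ[k] Ω) :
    convAV ρ f (g + h) = convAV ρ f g + convAV ρ f h := by
  simp only [convAV, map_add_right, LinearMap.add_comp, LinearMap.comp_add]

theorem convAV_sub_left (ρ : V →ₗ[k] A ⊗[k] V) (f g : A →ₗ[k] Ω) (h : V →ₗ[k] Ω) :
    convAV ρ (f - g) h = convAV ρ f h - convAV ρ g h := by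
  have map_sub_left : map (f - g) h = map f h - map g h := by ext; simp [sub_tmul]
  simp only [convAV, map_sub_left, LinearMap.sub_comp, LinearMap.comp_sub]

theorem convAV_assoc (ρ : V →ₗ[k] A ⊗[k] V)
    (hcoassoc : (TensorProduct.assoc k A A V).symm.toLinearMap ∘ₗ (ρ.lTensor A) ∘ₗ ρ =
        ((Coalgebra.comul (R := k) (A := A)).rTensor V) ∘ₗ ρ)
    (f g : A →ₗ[k] Ω) (h : V →ₗ[k] Ω) :
    convAV ρ f (convAV ρ g h) = convAV ρ (convAA f g) h := by
  have mul_assoc' : LinearMap.mul' k Ω ∘ₗ map f (LinearMap.mul' k Ω ∘ₗ map g h) =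
      LinearMap.mul' k Ω ∘ₗ map (LinearMap.mul' k Ω ∘ₗ map f g) h ∘ₗ
        (TensorProduct.assoc k A A V).symm.toLinearMap := by
    ext; simp [mul_assoc]
  calc convAV ρ f (convAV ρ g h)
      = (LinearMap.mul' k Ω ∘ₗ map f (LinearMap.mul' k Ω ∘ₗ map g h)) ∘ₗ ρ.lTensor A ∘ₗ ρ := by
        rw [LinearMap.comp_assoc, ← LinearMap.comp_assoc ρ, LinearMap.map_comp_lTensor]; rfl
    _ = LinearMap.mul' k Ω ∘ₗ map (LinearMap.mul' k Ω ∘ₗ map f g) h ∘ₗ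
          (Coalgebra.comul.rTensor V ∘ₗ ρ) := by
        rw [mul_assoc', ← hcoassoc]; simp only [LinearMap.comp_assoc]
    _ = convAV ρ (convAA f g) h := by
        rw [← LinearMap.comp_assoc ρ, LinearMap.map_comp_rTensor]; rfl

end Convolution

section Differential

variable {k A B V Ω : Type*} [Field k] [Ring A] [HopfAlgebra k A]
  [Ring B] [Algebra k B] [AddCommGroup V] [Module k V] [Ring Ω] [Algebra k Ω]

theorem AlgHom.comp_convAV (ι : B →ₐ[k] Ω) (ρ : V →ₗ[k] A ⊗[k] V) (f : A →ₗ[k] B)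
    (g : V →ₗ[k] B) :
    ι.toLinearMap ∘ₗ convAV ρ f g = convAV ρ (ι.toLinearMap ∘ₗ f) (ι.toLinearMap ∘ₗ g) := by
  simp only [convAV, map_comp, ← LinearMap.comp_assoc, AlgHom.comp_mul']

theorem AlgHom.toConv_comp_mul_toConv_comp_eq_one (ι : B →ₐ[k] Ω) {f g : A →ₗ[k] B}
    (h : toConv f * toConv g = 1) :
    toConv (ι.toLinearMap ∘ₗ f) * toConv (ι.toLinearMap ∘ₗ g) = 1 := by
  ext1
  calc convAA (ι.toLinearMap ∘ₗ f) (ι.toLinearMap ∘ₗ g)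
      = ι.toLinearMap ∘ₗ (toConv f * toConv g).ofConv := (ι.comp_convAV _ f g).symm
    _ = (1 : WithConv (A →ₗ[k] Ω)).ofConv := by rw [h]; ext; simp

theorem comp_convAV_of_leibniz {ι : B →ₐ[k] Ω} {d : Ω →ₗ[k] Ω}
    (hLeib : ∀ b c : B, d (ι b * ι c) = d (ι b) * ι c + ι b * d (ι c))
    (ρ : V →ₗ[k] A ⊗[k] V) (f : A →ₗ[k] B) (g : V →ₗ[k] B) :
    d ∘ₗ convAV ρ (ι.toLinearMap ∘ₗ f) (ι.toLinearMap ∘ₗ g) =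
      convAV ρ (d ∘ₗ ι.toLinearMap ∘ₗ f) (ι.toLinearMap ∘ₗ g) +
        convAV ρ (ι.toLinearMap ∘ₗ f) (d ∘ₗ ι.toLinearMap ∘ₗ g) := by
  have leibniz : (d ∘ₗ LinearMap.mul' k Ω) ∘ₗ map (ι.toLinearMap ∘ₗ f) (ι.toLinearMap ∘ₗ g) =
      LinearMap.mul' k Ω ∘ₗ map (d ∘ₗ ι.toLinearMap ∘ₗ f) (ι.toLinearMap ∘ₗ g) +
        LinearMap.mul' k Ω ∘ₗ map (ι.toLinearMap ∘ₗ f) (d ∘ₗ ι.toLinearMap ∘ₗ g) := by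
    ext; simp [hLeib]
  simp only [convAV, ← LinearMap.comp_assoc, ← LinearMap.add_comp]
  exact congrArg (· ∘ₗ ρ) leibniz

theorem comp_convOne_of_leibniz {C : Type*} [AddCommGroup C] [Module k C] [Coalgebra k C]
    {ι : B →ₐ[k] Ω} {d : Ω →ₗ[k] Ω}
    (hLeib : ∀ b c : B, d (ι b * ι c) = d (ι b) * ι c + ι b * d (ι c)) :
    d ∘ₗ (1 : WithConv (C →ₗ[k] Ω)).ofConv = 0 := by
  have hd1 : d 1 = 0 := by simpa using hLeib 1 1
  ext
  simp [Algebra.algebraMap_eq_smul_one, hd1]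

end Differential

theorem covariant_derivative_gauge_covariance_general
    {k A B V Ω : Type*} [Field k] [Ring A] [HopfAlgebra k A]
    [Ring B] [Algebra k B] [AddCommGroup V] [Module k V]
    [Ring Ω] [Algebra k Ω]
    (ι : B →ₐ[k] Ω) (d : Ω →ₗ[k] Ω)
    -- Leibniz rule of the first-order calculus on B
    (hLeib : ∀ b c : B, d (ι b * ι c) = d (ι b) * ι c + ι b * d (ι c))
    -- left A-comodule structure on V
    (ρL : V →ₗ[k] A ⊗[k] V)
    (hcoassoc : (TensorProduct.assoc k A A V).symm.toLinearMap ∘ₗ (ρL.lTensor A) ∘ₗ ρL =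
        ((Coalgebra.comul (R := k) (A := A)).rTensor V) ∘ₗ ρL)
    -- gauge transformation γ : A → B, convolution invertible with γ(1)=1
    (γ γinv : A →ₗ[k] B)
    (hγ₁ : (LinearMap.mul' k B) ∘ₗ (TensorProduct.map γ γinv) ∘ₗ Coalgebra.comul =
        (Algebra.linearMap k B) ∘ₗ Coalgebra.counit)
    (hγ₂ : (LinearMap.mul' k B) ∘ₗ (TensorProduct.map γinv γ) ∘ₗ Coalgebra.comul =
        (Algebra.linearMap k B) ∘ₗ Coalgebra.counit)
    -- the connection one-form β : A → Γ_B ⊆ Ω and a section σ : V → B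
    (β : A →ₗ[k] Ω) (σ : V →ₗ[k] B) :
    -- β^γ = γ*β*γ⁻¹ + γ*d(γ⁻¹),  σ^γ = γ*σ,  ∇ = d + β*
    let ιγ : A →ₗ[k] Ω := ι.toLinearMap ∘ₗ γ
    let ιγinv : A →ₗ[k] Ω := ι.toLinearMap ∘ₗ γinv
    let βγ : A →ₗ[k] Ω :=
      convAA ιγ (convAA β ιγinv) + convAA ιγ (d ∘ₗ ιγinv)
    let σγ : V →ₗ[k] B :=
      (LinearMap.mul' k B) ∘ₗ (TensorProduct.map γ σ) ∘ₗ ρL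
    let nablaSigma : V →ₗ[k] Ω :=
      d ∘ₗ (ι.toLinearMap ∘ₗ σ) + convAV ρL β (ι.toLinearMap ∘ₗ σ)
    d ∘ₗ (ι.toLinearMap ∘ₗ σγ) + convAV ρL βγ (ι.toLinearMap ∘ₗ σγ) =
      convAV ρL ιγ nablaSigma := by
  intro ιγ ιγinv βγ σγ nablaSigma
  have hinv : toConv ιγ * toConv ιγinv = 1 :=
    ι.toConv_comp_mul_toConv_comp_eq_one (WithConv.ext hγ₁)
  have hinv' : toConv ιγinv * toConv ιγ = 1 :=
    ι.toConv_comp_mul_toConv_comp_eq_one (WithConv.ext hγ₂)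
  have hdinv : toConv (d ∘ₗ ιγinv) * toConv ιγ + toConv ιγinv * toConv (d ∘ₗ ιγ) = 0 := by
    ext1
    calc convAA (d ∘ₗ ιγinv) ιγ + convAA ιγinv (d ∘ₗ ιγ) = d ∘ₗ convAA ιγinv ιγ :=
          (comp_convAV_of_leibniz hLeib (Coalgebra.comul (R := k) (A := A)) γinv γ).symm
      _ = d ∘ₗ (1 : WithConv (A →ₗ[k] Ω)).ofConv := congrArg (d ∘ₗ ofConv ·) hinv'
      _ = 0 := comp_convOne_of_leibniz hLeib
  have hβγ : convAA βγ ιγ = convAA ιγ β - d ∘ₗ ιγ :=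
    congrArg ofConv (gauge_transform_mul_eq (b := toConv β) hinv hinv' hdinv)
  have hσγ : ι.toLinearMap ∘ₗ σγ = convAV ρL ιγ (ι.toLinearMap ∘ₗ σ) := ι.comp_convAV ρL γ σ
  rw [hσγ, comp_convAV_of_leibniz hLeib, convAV_assoc ρL hcoassoc, hβγ, convAV_sub_left,
    convAV_add_right, ← convAV_assoc ρL hcoassoc]
  abel

theorem covariant_derivative_gauge_covariance
    {k A B V Ω : Type*} [Field k] [Ring A] [HopfAlgebra k A]
    [Ring B] [Algebra k B] [AddCommGroup V] [Module k V]
    [Ring Ω] [Algebra k Ω]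
    (ι : B →ₐ[k] Ω) (d : Ω →ₗ[k] Ω)
    -- Leibniz rule of the first-order calculus on B
    (hLeib : ∀ b c : B, d (ι b * ι c) = d (ι b) * ι c + ι b * d (ι c))
    -- left A-comodule structure on V
    (ρL : V →ₗ[k] A ⊗[k] V)
    (hcoassoc : (TensorProduct.assoc k A A V).symm.toLinearMap ∘ₗ (ρL.lTensor A) ∘ₗ ρL =
        ((Coalgebra.comul (R := k) (A := A)).rTensor V) ∘ₗ ρL)
    (hcounit : (TensorProduct.lid k V).toLinearMap ∘ₗ
        ((Coalgebra.counit (R := k) (A := A)).rTensor V) ∘ₗ ρL = LinearMap.id)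
    -- gauge transformation γ : A → B, convolution invertible with γ(1)=1
    (γ γinv : A →ₗ[k] B)
    (hγ₁ : (LinearMap.mul' k B) ∘ₗ (TensorProduct.map γ γinv) ∘ₗ Coalgebra.comul =
        (Algebra.linearMap k B) ∘ₗ Coalgebra.counit)
    (hγ₂ : (LinearMap.mul' k B) ∘ₗ (TensorProduct.map γinv γ) ∘ₗ Coalgebra.comul =
        (Algebra.linearMap k B) ∘ₗ Coalgebra.counit)
    (hγone : γ 1 = 1)
    -- the connection one-form β : A → Γ_B ⊆ Ω and a section σ : V → B
    (β : A →ₗ[k] Ω) (σ : V →ₗ[k] B) :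
    -- β^γ = γ*β*γ⁻¹ + γ*d(γ⁻¹),  σ^γ = γ*σ,  ∇ = d + β*
    let ιγ : A →ₗ[k] Ω := ι.toLinearMap ∘ₗ γ
    let ιγinv : A →ₗ[k] Ω := ι.toLinearMap ∘ₗ γinv
    let βγ : A →ₗ[k] Ω :=
      convAA ιγ (convAA β ιγinv) + convAA ιγ (d ∘ₗ ιγinv)
    let σγ : V →ₗ[k] B :=
      (LinearMap.mul' k B) ∘ₗ (TensorProduct.map γ σ) ∘ₗ ρL
    let nablaSigma : V →ₗ[k] Ω :=
      d ∘ₗ (ι.toLinearMap ∘ₗ σ) + convAV ρL β (ι.toLinearMap ∘ₗ σ)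
    d ∘ₗ (ι.toLinearMap ∘ₗ σγ) + convAV ρL βγ (ι.toLinearMap ∘ₗ σγ) =
      convAV ρL ιγ nablaSigma :=
  covariant_derivative_gauge_covariance_general ι d hLeib ρL hcoassoc γ γinv hγ₁ hγ₂ β σ
end

section
/- For two gauge transformations γ, γ' on a trivial quantum vector bundle and a connection one-form β : A → Γ_B, applying the gauge transformation rule twice satisfies (β^γ)^{γ'} = β^{γ'*γ}. -/
/- STATEMENT 4: For two gauge transformations γ, γ' and a connection one-form
β : A → Γ_B, applying the gauge transformation rule β^γ = γ*β*γ⁻¹ + γ*d(γ⁻¹)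
twice satisfies (β^γ)^{γ'} = β^{γ'*γ}.
Model: (Γ_B, d) sits inside a differential algebra Ω via ι : B → Ω. -/

open TensorProduct

/-- Convolution of maps A → B. -/
noncomputable def convB {k A B : Type*} [Field k] [Ring A] [HopfAlgebra k A]
    [Ring B] [Algebra k B] (f g : A →ₗ[k] B) : A →ₗ[k] B :=
  (LinearMap.mul' k B) ∘ₗ (TensorProduct.map f g) ∘ₗ Coalgebra.comul

/-- The gauge transform β^γ = γ*β*γ⁻¹ + γ*d(γ⁻¹) of a connection one-form. -/
noncomputable def gaugeTransform {k A B Ω : Type*} [Field k] [Ring A]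
    [HopfAlgebra k A] [Ring B] [Algebra k B] [Ring Ω] [Algebra k Ω]
    (ι : B →ₐ[k] Ω) (d : Ω →ₗ[k] Ω) (γ γinv : A →ₗ[k] B) (β : A →ₗ[k] Ω) :
    A →ₗ[k] Ω :=
  convAA (ι.toLinearMap ∘ₗ γ) (convAA β (ι.toLinearMap ∘ₗ γinv)) +
    convAA (ι.toLinearMap ∘ₗ γ) (d ∘ₗ ι.toLinearMap ∘ₗ γinv)

/-! Linear maps `A → Ω` form a ring under convolution (`WithConv`), and the algebra map `ι`
carries convolution in `B` to convolution in `Ω`. In that ring the gauge transform reads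
`γ β γ⁻¹ + γ d(γ⁻¹)`, and the Leibniz rule gives `d(γ⁻¹ γ'⁻¹) = d(γ⁻¹) γ'⁻¹ + γ⁻¹ d(γ'⁻¹)`.
Expanding both sides, they differ only in `γ' γ γ⁻¹ d(γ'⁻¹)` versus `γ' d(γ'⁻¹)`, which agree
since `γ γ⁻¹ = 1`. -/

open Coalgebra WithConv

section Convolution

variable {k A B Ω : Type*} [Field k] [Ring A] [HopfAlgebra k A]
  [Ring B] [Algebra k B] [Ring Ω] [Algebra k Ω]

lemma toConv_convAA (f g : A →ₗ[k] Ω) : toConv (convAA f g) = toConv f * toConv g := rfl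

lemma toConv_algHom_comp_convB (ι : B →ₐ[k] Ω) (f g : A →ₗ[k] B) :
    toConv (ι.toLinearMap ∘ₗ convB f g) =
      toConv (ι.toLinearMap ∘ₗ f) * toConv (ι.toLinearMap ∘ₗ g) :=
  congrArg toConv (LinearMap.algHom_comp_convMul_distrib ι (toConv f) (toConv g))

lemma toConv_algHom_comp_convOne (ι : B →ₐ[k] Ω) :
    toConv (ι.toLinearMap ∘ₗ (1 : WithConv (A →ₗ[k] B)).ofConv) = 1 := by
  ext a; simp

lemma toConv_gaugeTransform (ι : B →ₐ[k] Ω) (d : Ω →ₗ[k] Ω) (γ γinv : A →ₗ[k] B)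
    (β : A →ₗ[k] Ω) :
    toConv (gaugeTransform ι d γ γinv β) =
      toConv (ι.toLinearMap ∘ₗ γ) * toConv β * toConv (ι.toLinearMap ∘ₗ γinv) +
        toConv (ι.toLinearMap ∘ₗ γ) * toConv (d ∘ₗ ι.toLinearMap ∘ₗ γinv) := by
  rw [gaugeTransform, toConv_add, toConv_convAA, toConv_convAA, toConv_convAA, mul_assoc]

lemma toConv_derivation_comp_convB (ι : B →ₐ[k] Ω) (d : Ω →ₗ[k] Ω)
    (hLeib : ∀ b c : B, d (ι b * ι c) = d (ι b) * ι c + ι b * d (ι c))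
    (f g : A →ₗ[k] B) :
    toConv (d ∘ₗ ι.toLinearMap ∘ₗ convB f g) =
      toConv (d ∘ₗ ι.toLinearMap ∘ₗ f) * toConv (ι.toLinearMap ∘ₗ g) +
        toConv (ι.toLinearMap ∘ₗ f) * toConv (d ∘ₗ ι.toLinearMap ∘ₗ g) := by
  ext a
  have hfg : convB f g a = ∑ i ∈ (ℛ k a).index, f ((ℛ k a).left i) * g ((ℛ k a).right i) :=
    (ℛ k a).convMul_apply (toConv f) (toConv g)
  simp only [ofConv_add, LinearMap.add_apply, (ℛ k a).convMul_apply, ← Finset.sum_add_distrib]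
  simp [hfg, hLeib]

end Convolution

theorem gaugeTransform_comp_general {k A B Ω : Type*} [Field k] [Ring A]
    [HopfAlgebra k A] [Ring B] [Algebra k B] [Ring Ω] [Algebra k Ω]
    (ι : B →ₐ[k] Ω) (d : Ω →ₗ[k] Ω)
    (hLeib : ∀ b c : B, d (ι b * ι c) = d (ι b) * ι c + ι b * d (ι c))
    (γ γinv γ' γ'inv : A →ₗ[k] B)
    (hγ₁ : convB γ γinv = (Algebra.linearMap k B) ∘ₗ Coalgebra.counit)
    (β : A →ₗ[k] Ω) :
    gaugeTransform ι d γ' γ'inv (gaugeTransform ι d γ γinv β) =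
      gaugeTransform ι d (convB γ' γ) (convB γinv γ'inv) β := by
  have hinv : toConv (ι.toLinearMap ∘ₗ γ) * toConv (ι.toLinearMap ∘ₗ γinv) = 1 := by
    rw [← toConv_algHom_comp_convB, hγ₁]
    exact toConv_algHom_comp_convOne ι
  apply toConv_injective
  rw [toConv_gaugeTransform, toConv_gaugeTransform, toConv_gaugeTransform,
    toConv_algHom_comp_convB, toConv_algHom_comp_convB, toConv_derivation_comp_convB ι d hLeib]
  conv_lhs => rw [← one_mul (toConv (d ∘ₗ ι.toLinearMap ∘ₗ γ'inv)), ← hinv]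
  noncomm_ring

theorem gaugeTransform_comp {k A B Ω : Type*} [Field k] [Ring A]
    [HopfAlgebra k A] [Ring B] [Algebra k B] [Ring Ω] [Algebra k Ω]
    (ι : B →ₐ[k] Ω) (d : Ω →ₗ[k] Ω)
    (hLeib : ∀ b c : B, d (ι b * ι c) = d (ι b) * ι c + ι b * d (ι c))
    (γ γinv γ' γ'inv : A →ₗ[k] B)
    (hγ₁ : convB γ γinv = (Algebra.linearMap k B) ∘ₗ Coalgebra.counit)
    (hγ₂ : convB γinv γ = (Algebra.linearMap k B) ∘ₗ Coalgebra.counit)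
    (hγ'₁ : convB γ' γ'inv = (Algebra.linearMap k B) ∘ₗ Coalgebra.counit)
    (hγ'₂ : convB γ'inv γ' = (Algebra.linearMap k B) ∘ₗ Coalgebra.counit)
    (hγone : γ 1 = 1) (hγ'one : γ' 1 = 1)
    (β : A →ₗ[k] Ω) :
    gaugeTransform ι d γ' γ'inv (gaugeTransform ι d γ γinv β) =
      gaugeTransform ι d (convB γ' γ) (convB γinv γ'inv) β :=
  gaugeTransform_comp_general ι d hLeib γ γinv γ' γ'inv hγ₁ β
end

section
/- The curvature F = dβ + β*β of a connection β transforms under a gauge transformation γ as F^γ = γ*F*γ⁻¹, where F^γ = dβ^γ + β^γ*β^γ and β^γ = γ*β*γ⁻¹ + γ*d(γ⁻¹). -/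
/- STATEMENT 6: The curvature F = dβ + β*β transforms under a gauge
transformation γ as F^γ = γ*F*γ⁻¹, where F^γ = dβ^γ + β^γ*β^γ and
β^γ = γ*β*γ⁻¹ + γ*d(γ⁻¹).
Model: Ω(B) is a differential algebra containing B via ι, with one-forms a
submodule Γ, differential d with d² = 0 and the graded Leibniz rule. -/

open TensorProduct

section Aux

variable {k A Ω : Type*} [Field k] [Ring A] [HopfAlgebra k A] [Ring Ω] [Algebra k Ω]

noncomputable def convUnit (k A Ω : Type*) [Field k] [Ring A] [HopfAlgebra k A]
    [Ring Ω] [Algebra k Ω] : A →ₗ[k] Ω :=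
  (Algebra.linearMap k Ω) ∘ₗ Coalgebra.counit

lemma convAA_apply (f g : A →ₗ[k] Ω) (a : A) :
    convAA f g a = LinearMap.mul' k Ω (TensorProduct.map f g (Coalgebra.comul a)) := rfl

lemma convAA_add_left (f g h : A →ₗ[k] Ω) :
    convAA (f + g) h = convAA f h + convAA g h := by
  simp [convAA, TensorProduct.map_add_left, LinearMap.add_comp, LinearMap.comp_add]

lemma convAA_add_right (f g h : A →ₗ[k] Ω) :
    convAA f (g + h) = convAA f g + convAA f h := by
  simp [convAA, TensorProduct.map_add_right, LinearMap.add_comp, LinearMap.comp_add]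

lemma convAA_zero_left (g : A →ₗ[k] Ω) : convAA (0 : A →ₗ[k] Ω) g = 0 := by
  simp [convAA, TensorProduct.map_zero_left]

lemma convAA_zero_right (g : A →ₗ[k] Ω) : convAA g (0 : A →ₗ[k] Ω) = 0 := by
  simp [convAA, TensorProduct.map_zero_right]

lemma convAA_neg_left (f g : A →ₗ[k] Ω) : convAA (-f) g = -(convAA f g) := by
  have h : convAA (-f) g + convAA f g = 0 := by
    rw [← convAA_add_left, neg_add_cancel, convAA_zero_left]
  exact eq_neg_of_add_eq_zero_left h

end Aux

section Aux2

variable {k A Ω : Type*} [Field k] [Ring A] [HopfAlgebra k A] [Ring Ω] [Algebra k Ω]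

lemma convAA_neg_right (f g : A →ₗ[k] Ω) : convAA f (-g) = -(convAA f g) := by
  have h : convAA f (-g) + convAA f g = 0 := by
    rw [← convAA_add_right, neg_add_cancel, convAA_zero_right]
  exact eq_neg_of_add_eq_zero_left h

set_option synthInstance.maxHeartbeats 1000000 in
lemma convAA_assoc (f g h : A →ₗ[k] Ω) :
    convAA (convAA f g) h = convAA f (convAA g h) := by
  apply LinearMap.ext; intro a
  have e1 : ∀ t : A ⊗[k] A,
      TensorProduct.map (convAA f g) h t
        = TensorProduct.map (LinearMap.mul' k Ω ∘ₗ TensorProduct.map f g) h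
            (LinearMap.rTensor A (Coalgebra.comul (R := k)) t) := by
    intro t
    induction t using TensorProduct.induction_on with
    | zero => simp
    | tmul x y => simp [convAA_apply]
    | add x y hx hy => simp [map_add, hx, hy]
  have e2 : ∀ t : A ⊗[k] A,
      TensorProduct.map f (convAA g h) t
        = TensorProduct.map f (LinearMap.mul' k Ω ∘ₗ TensorProduct.map g h)
            (LinearMap.lTensor A (Coalgebra.comul (R := k)) t) := by
    intro t
    induction t using TensorProduct.induction_on with
    | zero => simp
    | tmul x y => simp [convAA_apply]
    | add x y hx hy => simp [map_add, hx, hy]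
  have key : ∀ s : A ⊗[k] (A ⊗[k] A),
      LinearMap.mul' k Ω (TensorProduct.map (LinearMap.mul' k Ω ∘ₗ TensorProduct.map f g) h
          ((TensorProduct.assoc k A A A).symm s))
        = LinearMap.mul' k Ω (TensorProduct.map f (LinearMap.mul' k Ω ∘ₗ TensorProduct.map g h) s) := by
    intro s
    induction s using TensorProduct.induction_on with
    | zero => simp
    | tmul x y =>
      induction y using TensorProduct.induction_on with
      | zero => simp [tmul_zero]
      | tmul b c => simp [mul_assoc]
      | add y z hy hz => simp [tmul_add, map_add, hy, hz]
    | add x y hx hy => simp [map_add, hx, hy]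
  calc convAA (convAA f g) h a
      = LinearMap.mul' k Ω (TensorProduct.map (convAA f g) h (Coalgebra.comul a)) := rfl
    _ = LinearMap.mul' k Ω (TensorProduct.map (LinearMap.mul' k Ω ∘ₗ TensorProduct.map f g) h
          (LinearMap.rTensor A (Coalgebra.comul (R := k)) (Coalgebra.comul a))) := by rw [e1]
    _ = LinearMap.mul' k Ω (TensorProduct.map (LinearMap.mul' k Ω ∘ₗ TensorProduct.map f g) h
          ((TensorProduct.assoc k A A A).symm
            ((TensorProduct.assoc k A A A)
              (LinearMap.rTensor A (Coalgebra.comul (R := k)) (Coalgebra.comul a))))) := by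
        rw [LinearEquiv.symm_apply_apply]
    _ = LinearMap.mul' k Ω (TensorProduct.map f (LinearMap.mul' k Ω ∘ₗ TensorProduct.map g h)
          ((TensorProduct.assoc k A A A)
            (LinearMap.rTensor A (Coalgebra.comul (R := k)) (Coalgebra.comul a)))) := key _
    _ = LinearMap.mul' k Ω (TensorProduct.map f (LinearMap.mul' k Ω ∘ₗ TensorProduct.map g h)
          (LinearMap.lTensor A (Coalgebra.comul (R := k)) (Coalgebra.comul a))) := by
        rw [Coalgebra.coassoc_apply]
    _ = convAA f (convAA g h) a := by rw [convAA_apply, e2]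

lemma convUnit_convAA (f : A →ₗ[k] Ω) : convAA (convUnit k A Ω) f = f := by
  apply LinearMap.ext; intro a
  have e1 : ∀ t : A ⊗[k] A,
      TensorProduct.map (convUnit k A Ω) f t
        = TensorProduct.map (Algebra.linearMap k Ω) f
            (LinearMap.rTensor A (Coalgebra.counit (R := k)) t) := by
    intro t
    induction t using TensorProduct.induction_on with
    | zero => simp
    | tmul x y => rfl
    | add x y hx hy => simp [map_add, hx, hy]
  calc convAA (convUnit k A Ω) f a
      = LinearMap.mul' k Ω (TensorProduct.map (Algebra.linearMap k Ω) f
          (LinearMap.rTensor A (Coalgebra.counit (R := k)) (Coalgebra.comul a))) := by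
        rw [convAA_apply, e1]
    _ = f a := by rw [Coalgebra.rTensor_counit_comul]; simp

lemma convAA_convUnit (f : A →ₗ[k] Ω) : convAA f (convUnit k A Ω) = f := by
  apply LinearMap.ext; intro a
  have e1 : ∀ t : A ⊗[k] A,
      TensorProduct.map f (convUnit k A Ω) t
        = TensorProduct.map f (Algebra.linearMap k Ω)
            (LinearMap.lTensor A (Coalgebra.counit (R := k)) t) := by
    intro t
    induction t using TensorProduct.induction_on with
    | zero => simp
    | tmul x y => rfl
    | add x y hx hy => simp [map_add, hx, hy]
  calc convAA f (convUnit k A Ω) a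
      = LinearMap.mul' k Ω (TensorProduct.map f (Algebra.linearMap k Ω)
          (LinearMap.lTensor A (Coalgebra.counit (R := k)) (Coalgebra.comul a))) := by
        rw [convAA_apply, e1]
    _ = f a := by rw [Coalgebra.lTensor_counit_comul]; simp

lemma leibniz_conv (d : Ω →ₗ[k] Ω) (f x : A →ₗ[k] Ω)
    (hf : ∀ (a : A) (y : Ω), d (f a * y) = d (f a) * y + f a * d y) :
    d ∘ₗ convAA f x = convAA (d ∘ₗ f) x + convAA f (d ∘ₗ x) := by
  apply LinearMap.ext; intro a
  simp only [LinearMap.comp_apply, LinearMap.add_apply, convAA_apply]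
  generalize Coalgebra.comul (R := k) a = t
  induction t using TensorProduct.induction_on with
  | zero => simp
  | tmul p q => simpa using hf p (x q)
  | add s t hs ht => simp only [map_add, hs, ht]; abel

lemma leibniz_conv_graded (d : Ω →ₗ[k] Ω) (f x : A →ₗ[k] Ω)
    (hf : ∀ (a : A) (y : Ω), d (f a * y) = d (f a) * y - f a * d y) :
    d ∘ₗ convAA f x = convAA (d ∘ₗ f) x - convAA f (d ∘ₗ x) := by
  apply LinearMap.ext; intro a
  simp only [LinearMap.comp_apply, LinearMap.sub_apply, convAA_apply]
  generalize Coalgebra.comul (R := k) a = t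
  induction t using TensorProduct.induction_on with
  | zero => simp
  | tmul p q => simpa using hf p (x q)
  | add s t hs ht => simp only [map_add, hs, ht]; abel

lemma convAA_alg_comp {B : Type*} [Ring B] [Algebra k B] (ι : B →ₐ[k] Ω)
    (φ ψ : A →ₗ[k] B) :
    convAA (ι.toLinearMap ∘ₗ φ) (ι.toLinearMap ∘ₗ ψ) = ι.toLinearMap ∘ₗ convB φ ψ := by
  apply LinearMap.ext; intro a
  simp only [LinearMap.comp_apply, convAA_apply]
  show _ = ι (LinearMap.mul' k B (TensorProduct.map φ ψ (Coalgebra.comul a)))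
  generalize Coalgebra.comul (R := k) a = t
  induction t using TensorProduct.induction_on with
  | zero => simp
  | tmul p q => simp
  | add s t hs ht => simp only [map_add, hs, ht]

end Aux2

theorem curvature_gauge_transformation
    {k A B Ω : Type*} [Field k] [Ring A] [HopfAlgebra k A]
    [Ring B] [Algebra k B] [Ring Ω] [Algebra k Ω]
    (ι : B →ₐ[k] Ω) (d : Ω →ₗ[k] Ω) (Γ : Submodule k Ω)
    (hd2 : ∀ x : Ω, d (d x) = 0)
    (hLeib0 : ∀ (b : B) (y : Ω), d (ι b * y) = d (ι b) * y + ι b * d y)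
    (hLeib1 : ∀ x ∈ Γ, ∀ y : Ω, d (x * y) = d x * y - x * d y)
    (hdB : ∀ b : B, d (ι b) ∈ Γ)
    -- gauge transformation
    (γ γinv : A →ₗ[k] B)
    (hγ₁ : convB γ γinv = (Algebra.linearMap k B) ∘ₗ Coalgebra.counit)
    (hγ₂ : convB γinv γ = (Algebra.linearMap k B) ∘ₗ Coalgebra.counit)
    (hγone : γ 1 = 1)
    -- connection one-form
    (β : A →ₗ[k] Ω) (hβ : ∀ a : A, β a ∈ Γ) :
    let ιγ : A →ₗ[k] Ω := ι.toLinearMap ∘ₗ γ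
    let ιγinv : A →ₗ[k] Ω := ι.toLinearMap ∘ₗ γinv
    let βγ : A →ₗ[k] Ω :=
      convAA ιγ (convAA β ιγinv) + convAA ιγ (d ∘ₗ ιγinv)
    let F : A →ₗ[k] Ω := d ∘ₗ β + convAA β β
    let Fγ : A →ₗ[k] Ω := d ∘ₗ βγ + convAA βγ βγ
    Fγ = convAA ιγ (convAA F ιγinv) := by
  intro ιγ ιγinv βγ F Fγ
  -- basic facts
  have hone : d 1 = 0 := by
    have h := hLeib0 1 1
    simp only [map_one, one_mul, mul_one] at h
    exact (left_eq_add.mp h)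
  have hdu : d ∘ₗ convUnit k A Ω = 0 := by
    apply LinearMap.ext; intro a
    simp only [LinearMap.comp_apply, LinearMap.zero_apply, convUnit,
      Algebra.linearMap_apply]
    rw [Algebra.algebraMap_eq_smul_one, map_smul, hone, smul_zero]
  have halg : ι.toLinearMap ∘ₗ ((Algebra.linearMap k B) ∘ₗ Coalgebra.counit)
      = convUnit k A Ω := by
    apply LinearMap.ext; intro a
    simp [convUnit]
  have hgi : convAA ιγ ιγinv = convUnit k A Ω := by
    rw [show ιγ = ι.toLinearMap ∘ₗ γ from rfl, show ιγinv = ι.toLinearMap ∘ₗ γinv from rfl,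
      convAA_alg_comp, hγ₁, halg]
  have hig : convAA ιγinv ιγ = convUnit k A Ω := by
    rw [show ιγ = ι.toLinearMap ∘ₗ γ from rfl, show ιγinv = ι.toLinearMap ∘ₗ γinv from rfl,
      convAA_alg_comp, hγ₂, halg]
  have hc1 : ∀ x : A →ₗ[k] Ω, convAA ιγ (convAA ιγinv x) = x := by
    intro x; rw [← convAA_assoc, hgi, convUnit_convAA]
  have hc2 : ∀ x : A →ₗ[k] Ω, convAA ιγinv (convAA ιγ x) = x := by
    intro x; rw [← convAA_assoc, hig, convUnit_convAA]
  -- Leibniz rules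
  have hLg : ∀ x : A →ₗ[k] Ω,
      d ∘ₗ convAA ιγ x = convAA (d ∘ₗ ιγ) x + convAA ιγ (d ∘ₗ x) := by
    intro x; exact leibniz_conv d ιγ x (fun a y => hLeib0 (γ a) y)
  have hLgi : ∀ x : A →ₗ[k] Ω,
      d ∘ₗ convAA ιγinv x = convAA (d ∘ₗ ιγinv) x + convAA ιγinv (d ∘ₗ x) := by
    intro x; exact leibniz_conv d ιγinv x (fun a y => hLeib0 (γinv a) y)
  have hLβ : ∀ x : A →ₗ[k] Ω,
      d ∘ₗ convAA β x = convAA (d ∘ₗ β) x - convAA β (d ∘ₗ x) := by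
    intro x; exact leibniz_conv_graded d β x (fun a y => hLeib1 (β a) (hβ a) y)
  have hw0 : d ∘ₗ (d ∘ₗ ιγinv) = 0 := by
    apply LinearMap.ext; intro a; exact hd2 (ιγinv a)
  -- key relation: γ * d(γ⁻¹) = - dγ * γ⁻¹, hence d(γ⁻¹) = - γ⁻¹ * dγ * γ⁻¹
  have hgw : convAA ιγ (d ∘ₗ ιγinv) = -(convAA (d ∘ₗ ιγ) ιγinv) := by
    have h := hLg ιγinv
    rw [hgi, hdu] at h
    exact eq_neg_of_add_eq_zero_right h.symm
  have hwexp : d ∘ₗ ιγinv = -(convAA ιγinv (convAA (d ∘ₗ ιγ) ιγinv)) := by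
    conv_lhs => rw [← hc2 (d ∘ₗ ιγinv)]
    rw [hgw, convAA_neg_right]
  -- main computation
  have hβγ : βγ = convAA ιγ (convAA β ιγinv) + convAA ιγ (d ∘ₗ ιγinv) := rfl
  show d ∘ₗ βγ + convAA βγ βγ = convAA ιγ (convAA (d ∘ₗ β + convAA β β) ιγinv)
  rw [hβγ, LinearMap.comp_add, hLg (convAA β ιγinv), hLg (d ∘ₗ ιγinv), hLβ ιγinv,
    hw0, convAA_zero_right, hwexp]
  simp only [convAA_add_left, convAA_add_right, convAA_neg_left, convAA_neg_right,
    convAA_assoc, hc1, hc2, sub_eq_add_neg, neg_neg, neg_add, add_zero]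
  abel
end

section
/- If Φ : A → P is a convolution-invertible intertwiner for Δ_R with Φ(1)=1, then its convolution inverse satisfies Δ_R(Φ⁻¹(a)) = Σ Φ⁻¹(a₍₂₎) ⊗ Sa₍₁₎ for all a ∈ A. -/
/-!
Work in the convolution algebra `Hom(A, P ⊗ A)`. The intertwining property factors `Δ_R ∘ Φ` as
the convolution product `(Φ ⊗ 1) * (1 ⊗ id)`, whose left inverse is visibly
`(1 ⊗ S) * (Φ⁻¹ ⊗ 1)`, i.e. `a ↦ Σ Φ⁻¹(a₍₂₎) ⊗ S a₍₁₎`. Since `Δ_R` is an algebra map,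
`Δ_R ∘ Φ⁻¹` is a right inverse of `Δ_R ∘ Φ`, and left and right inverses coincide.
-/

open TensorProduct WithConv
open scoped Coalgebra

namespace LinearMap

variable {R C A B : Type*} [CommSemiring R] [AddCommMonoid C] [Module R C] [Coalgebra R C]
  [Semiring A] [Algebra R A] [Semiring B] [Algebra R B]

lemma algHom_comp_convMul_eq_one (h : A →ₐ[R] B) {f g : C →ₗ[R] A}
    (hfg : toConv f * toConv g = 1) :
    toConv (h.toLinearMap ∘ₗ f) * toConv (h.toLinearMap ∘ₗ g) = 1 := by
  rw [← toConv_ofConv (_ * _), ← algHom_comp_convMul_distrib, ofConv_toConv, ofConv_toConv, hfg]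
  ext c
  simp

lemma includeLeft_comp_convMul_includeRight_comp (f : C →ₗ[R] A) (g : C →ₗ[R] B) :
    toConv (Algebra.TensorProduct.includeLeft.toLinearMap ∘ₗ f) *
        toConv ((Algebra.TensorProduct.includeRight (R := R) (A := A)).toLinearMap ∘ₗ g) =
      toConv (map f g ∘ₗ Coalgebra.comul) := by
  ext c
  simp [(ℛ R c).convMul_apply, ← (ℛ R c).eq, Algebra.TensorProduct.tmul_mul_tmul]

lemma includeRight_comp_convMul_includeLeft_comp (f : C →ₗ[R] A) (g : C →ₗ[R] B) :
    toConv ((Algebra.TensorProduct.includeRight (R := R) (A := A)).toLinearMap ∘ₗ g) *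
        toConv (Algebra.TensorProduct.includeLeft.toLinearMap ∘ₗ f) =
      toConv ((TensorProduct.comm R B A).toLinearMap ∘ₗ map g f ∘ₗ Coalgebra.comul) := by
  ext c
  simp [(ℛ R c).convMul_apply, ← (ℛ R c).eq, Algebra.TensorProduct.tmul_mul_tmul]

end LinearMap

theorem coaction_of_convolution_inverse_general
    {k A P : Type*} [Field k] [Ring A] [HopfAlgebra k A]
    [Ring P] [Algebra k P]
    (ΔR : P →ₐ[k] P ⊗[k] A)
    (Φ Φinv : A →ₗ[k] P)
    (hint : ΔR.toLinearMap ∘ₗ Φ = (Φ.rTensor A) ∘ₗ Coalgebra.comul)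
    (hΦ₁ : (LinearMap.mul' k P) ∘ₗ (TensorProduct.map Φ Φinv) ∘ₗ Coalgebra.comul =
        (Algebra.linearMap k P) ∘ₗ Coalgebra.counit)
    (hΦ₂ : (LinearMap.mul' k P) ∘ₗ (TensorProduct.map Φinv Φ) ∘ₗ Coalgebra.comul =
        (Algebra.linearMap k P) ∘ₗ Coalgebra.counit) :
    ΔR.toLinearMap ∘ₗ Φinv =
      (TensorProduct.comm k A P).toLinearMap ∘ₗ
        (TensorProduct.map (HopfAlgebra.antipode (R := k) (A := A)) Φinv) ∘ₗ
        Coalgebra.comul := by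
  let iP := (Algebra.TensorProduct.includeLeft (R := k) (S := k) (A := P) (B := A)).toLinearMap
  let iA := (Algebra.TensorProduct.includeRight (R := k) (A := P) (B := A)).toLinearMap
  have hΦinv_mul_Φ : toConv Φinv * toConv Φ = 1 := congrArg toConv hΦ₂
  have hΔΦ : toConv (ΔR.toLinearMap ∘ₗ Φ) = toConv (iP ∘ₗ Φ) * toConv (iA ∘ₗ .id) := by
    rw [hint, LinearMap.includeLeft_comp_convMul_includeRight_comp]
    rfl
  have hright : toConv (ΔR.toLinearMap ∘ₗ Φ) * toConv (ΔR.toLinearMap ∘ₗ Φinv) = 1 :=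
    LinearMap.algHom_comp_convMul_eq_one ΔR (congrArg toConv hΦ₁)
  have hleft : (toConv (iA ∘ₗ HopfAlgebra.antipode k) * toConv (iP ∘ₗ Φinv)) *
      toConv (ΔR.toLinearMap ∘ₗ Φ) = 1 := by
    rw [hΔΦ, mul_assoc, ← mul_assoc (toConv (iP ∘ₗ Φinv)),
      LinearMap.algHom_comp_convMul_eq_one _ hΦinv_mul_Φ, one_mul,
      LinearMap.algHom_comp_convMul_eq_one _ LinearMap.antipode_mul_id]
  exact congrArg ofConv <| (left_inv_eq_right_inv hleft hright).symm.trans <|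
    LinearMap.includeRight_comp_convMul_includeLeft_comp Φinv (HopfAlgebra.antipode k)

theorem coaction_of_convolution_inverse
    {k A P : Type*} [Field k] [Ring A] [HopfAlgebra k A]
    [Ring P] [Algebra k P]
    (ΔR : P →ₐ[k] P ⊗[k] A)
    (hcoassoc : (TensorProduct.assoc k P A A).toLinearMap ∘ₗ
        (ΔR.toLinearMap.rTensor A) ∘ₗ ΔR.toLinearMap =
        ((Coalgebra.comul (R := k) (A := A)).lTensor P) ∘ₗ ΔR.toLinearMap)
    (hcounit : (TensorProduct.rid k P).toLinearMap ∘ₗ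
        ((Coalgebra.counit (R := k) (A := A)).lTensor P) ∘ₗ ΔR.toLinearMap =
        LinearMap.id)
    (Φ Φinv : A →ₗ[k] P)
    (hint : ΔR.toLinearMap ∘ₗ Φ = (Φ.rTensor A) ∘ₗ Coalgebra.comul)
    (hΦone : Φ 1 = 1)
    (hΦ₁ : (LinearMap.mul' k P) ∘ₗ (TensorProduct.map Φ Φinv) ∘ₗ Coalgebra.comul =
        (Algebra.linearMap k P) ∘ₗ Coalgebra.counit)
    (hΦ₂ : (LinearMap.mul' k P) ∘ₗ (TensorProduct.map Φinv Φ) ∘ₗ Coalgebra.comul =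
        (Algebra.linearMap k P) ∘ₗ Coalgebra.counit) :
    ΔR.toLinearMap ∘ₗ Φinv =
      (TensorProduct.comm k A P).toLinearMap ∘ₗ
        (TensorProduct.map (HopfAlgebra.antipode (R := k) (A := A)) Φinv) ∘ₗ
        Coalgebra.comul :=
  coaction_of_convolution_inverse_general ΔR Φ Φinv hint hΦ₁ hΦ₂
end
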